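/- arXiv:0801.2089 — 6 statements merged into one kernel-verified Lean document; each statement's English description precedes it below -/
import Mathlib

section
/- Let K be a field of characteristic different from 2, and let a, b, c, d ∈ K with a ≠ 0 and b ≠ 0. Then every K-algebra homomorphism φ : ℍ[K,a,b] → ℍ[K,c,d] is bijective, hence an isomorphism of K-algebras. -/
open Quaternion

/-- Any `K`-algebra homomorphism between quaternion algebras over a field `K`
of characteristic `≠ 2` (with `a b ≠ 0`) is bijective. -/
theorem stmt_0 (K : Type*) [Field K] (hchar : (2 : K) ≠ 0)
    (a b c d : K) (ha : a ≠ 0) (hb : b ≠ 0)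
    (φ : ℍ[K,a,b] →ₐ[K] ℍ[K,c,d]) :
    Function.Bijective φ := by
  have hinj : Function.Injective φ := by
    rw [injective_iff_map_eq_zero]
    intro x hx
    have key : ∀ y : ℍ[K,a,b], φ y = 0 → ∀ z w : ℍ[K,a,b], φ (z * y * w) = 0 := by
      intro y hy z w; rw [map_mul, map_mul, hy, mul_zero, zero_mul]
    have smul_ker : ∀ (r : K) (y : ℍ[K,a,b]), r ≠ 0 → φ (r • y) = 0 → φ y = 0 := by
      intro r y hr h
      rw [map_smul, smul_eq_zero] at h
      exact h.resolve_left hr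
    have coe_ker : ∀ r : K, φ (r : ℍ[K,a,b]) = 0 → r = 0 := by
      intro r h
      rw [← QuaternionAlgebra.coe_algebraMap, AlgHom.commutes] at h
      exact (algebraMap K ℍ[K,c,d]).injective (by rw [h, map_zero])
    set i : ℍ[K,a,b] := ⟨0,1,0,0⟩ with hi
    set j : ℍ[K,a,b] := ⟨0,0,1,0⟩ with hj
    -- Step 1: kill the j,k components
    have e1 : (2*a) • (⟨x.re, x.imI, 0, 0⟩ : ℍ[K,a,b]) = a • x + i * x * i := by
      ext <;> simp [hi] <;> ring
    have h1 : φ (⟨x.re, x.imI, 0, 0⟩ : ℍ[K,a,b]) = 0 := by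
      apply smul_ker (2*a) _ (mul_ne_zero hchar ha)
      rw [e1, map_add, map_smul, hx, smul_zero, zero_add]
      exact key x hx i i
    -- Step 2: the real part vanishes
    have e2 : (2*b) • ((x.re : K) : ℍ[K,a,b]) =
        b • (⟨x.re, x.imI, 0, 0⟩ : ℍ[K,a,b]) + j * (⟨x.re, x.imI, 0, 0⟩ : ℍ[K,a,b]) * j := by
      ext <;> simp [hj] <;> ring
    have hre : x.re = 0 := by
      apply coe_ker
      apply smul_ker (2*b) _ (mul_ne_zero hchar hb)
      rw [e2, map_add, map_smul, h1, smul_zero, zero_add]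
      exact key _ h1 j j
    -- Step 3: the i component vanishes
    have e3 : i * (⟨x.re, x.imI, 0, 0⟩ : ℍ[K,a,b]) * 1 = ((a * x.imI : K) : ℍ[K,a,b]) := by
      ext <;> simp [hi, hre]
    have himI : x.imI = 0 := by
      have := coe_ker (a * x.imI) (by rw [← e3]; exact key _ h1 i 1)
      exact (mul_eq_zero.mp this).resolve_left ha
    -- Step 4: kill the k component, isolate the j component
    have hx' : x = (⟨0, 0, x.imJ, x.imK⟩ : ℍ[K,a,b]) := by
      ext <;> simp [hre, himI]
    have e4 : (2*b) • (⟨0, 0, x.imJ, 0⟩ : ℍ[K,a,b]) = b • x + j * x * j := by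
      rw [hx']; ext <;> simp [hj] <;> ring
    have h4 : φ (⟨0, 0, x.imJ, 0⟩ : ℍ[K,a,b]) = 0 := by
      apply smul_ker (2*b) _ (mul_ne_zero hchar hb)
      rw [e4, map_add, map_smul, hx, smul_zero, zero_add]
      exact key x hx j j
    have e5 : j * (⟨0, 0, x.imJ, 0⟩ : ℍ[K,a,b]) * 1 = ((b * x.imJ : K) : ℍ[K,a,b]) := by
      ext <;> simp [hj]
    have himJ : x.imJ = 0 := by
      have := coe_ker (b * x.imJ) (by rw [← e5]; exact key _ h4 j 1)
      exact (mul_eq_zero.mp this).resolve_left hb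
    -- Step 5: the k component vanishes
    have hx'' : x = (⟨0, 0, 0, x.imK⟩ : ℍ[K,a,b]) := by
      ext <;> simp [hre, himI, himJ]
    have e6 : i * x * j = ((a * b * x.imK : K) : ℍ[K,a,b]) := by
      rw [hx'']; ext <;> simp [hi, hj] <;> ring
    have himK : x.imK = 0 := by
      have := coe_ker (a * b * x.imK) (by rw [← e6]; exact key x hx i j)
      rcases mul_eq_zero.mp this with h | h
      · exact absurd h (mul_ne_zero ha hb)
      · exact h
    ext <;> simp [hre, himI, himJ, himK]
  refine ⟨hinj, ?_⟩
  have := (LinearMap.injective_iff_surjective_of_finrank_eq_finrank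
    (V := ℍ[K,a,b]) (V₂ := ℍ[K,c,d]) (f := φ.toLinearMap)
    (by rw [QuaternionAlgebra.finrank_eq_four, QuaternionAlgebra.finrank_eq_four])).mp hinj
  exact this
end

section
/- Let N be a positive integer and let φ^N : ℍ[ℚ,−N,1] → M₂(ℚ) be the map sending x + y·i + z·j + t·k to !![x − z, −y − t; N·(y − t), x + z]. Then the image under φ^N of the ℤ-submodule R(N) of ℍ[ℚ,−N,1] spanned by e₁ = 1, e₂ = (1+j)/2, e₃ = (i+k)/2, e₄ = N·j + k equals the set of matrices γ ∈ M₂(ℚ) all of whose entries are integers and whose lower-left entry is divisible by N. -/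
open Quaternion

/-- The map `φ^N` from `ℍ[ℚ,-N,1]` to `M₂(ℚ)` sending `x + y i + z j + t k` to
`!![x - z, -y - t; N(y - t), x + z]`. -/
def phiN (N : ℕ) : ℍ[ℚ, -(N : ℚ), 1] → Matrix (Fin 2) (Fin 2) ℚ := fun h =>
  !![h.re - h.imJ, -h.imI - h.imK; (N : ℚ) * (h.imI - h.imK), h.re + h.imJ]

/-- The Eichler order `R(N) = ℤ⟨1, (1+j)/2, (i+k)/2, Nj + k⟩` in `ℍ[ℚ,-N,1]`. -/
def RN (N : ℕ) : Submodule ℤ ℍ[ℚ, -(N : ℚ), 1] :=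
  Submodule.span ℤ
    {(1 : ℍ[ℚ, -(N : ℚ), 1]), ⟨1/2, 0, 1/2, 0⟩, ⟨0, 1/2, 0, 1/2⟩, ⟨0, 0, (N : ℚ), 1⟩}

/-- The image of `R(N)` under `φ^N` is the set of integral matrices that are
upper-triangular mod `N`. -/
theorem stmt_3 (N : ℕ) (hN : 0 < N) :
    phiN N '' (RN N : Set ℍ[ℚ, -(N : ℚ), 1]) =
      {γ : Matrix (Fin 2) (Fin 2) ℚ |
        (∀ i j : Fin 2, ∃ m : ℤ, γ i j = (m : ℚ)) ∧ ∃ m : ℤ, γ 1 0 = (N : ℚ) * m} := by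
  ext γ
  constructor
  · rintro ⟨q, hq, rfl⟩
    -- stronger invariant: coefficients pattern
    have key : ∀ q ∈ RN N, ∃ a b c d : ℤ,
        q.re = a + b/2 ∧ q.imI = c/2 ∧ q.imJ = b/2 + d*N ∧ q.imK = c/2 + d := by
      intro q hq
      induction hq using Submodule.span_induction with
      | mem x h =>
        simp only [Set.mem_insert_iff, Set.mem_singleton_iff] at h
        rcases h with rfl | rfl | rfl | rfl
        · exact ⟨1, 0, 0, 0, by norm_num [QuaternionAlgebra.re_one, QuaternionAlgebra.imI_one,
            QuaternionAlgebra.imJ_one, QuaternionAlgebra.imK_one]⟩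
        · exact ⟨0, 1, 0, 0, by norm_num⟩
        · exact ⟨0, 0, 1, 0, by norm_num⟩
        · exact ⟨0, 0, 0, 1, by norm_num⟩
      | zero => exact ⟨0, 0, 0, 0, by norm_num⟩
      | add x y hx hy ihx ihy =>
        obtain ⟨a, b, c, d, h1, h2, h3, h4⟩ := ihx
        obtain ⟨a', b', c', d', h1', h2', h3', h4'⟩ := ihy
        exact ⟨a + a', b + b', c + c', d + d', by push_cast; simp [h1, h1']; ring,
          by push_cast; simp [h2, h2']; ring, by push_cast; simp [h3, h3']; ring,
          by push_cast; simp [h4, h4']; ring⟩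
      | smul n x hx ihx =>
        obtain ⟨a, b, c, d, h1, h2, h3, h4⟩ := ihx
        refine ⟨n*a, n*b, n*c, n*d, ?_, ?_, ?_, ?_⟩ <;>
          push_cast <;>
            simp [QuaternionAlgebra.re_smul, QuaternionAlgebra.imI_smul,
              QuaternionAlgebra.imJ_smul, QuaternionAlgebra.imK_smul, h1, h2, h3, h4,
              zsmul_eq_mul] <;> push_cast <;> ring
    obtain ⟨a, b, c, d, h1, h2, h3, h4⟩ := key q hq
    constructor
    · intro i j
      fin_cases i <;> fin_cases j <;> simp [phiN, h1, h2, h3, h4]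
      · exact ⟨a - d*N, by push_cast; ring⟩
      · exact ⟨-c - d, by push_cast; ring⟩
      · exact ⟨-d*N, by push_cast; ring⟩
      · exact ⟨a + b + d*N, by push_cast; ring⟩
    · exact ⟨-d, by simp [phiN, h2, h4]⟩
  · rintro ⟨hint, m, hm⟩
    obtain ⟨m00, h00⟩ := hint 0 0
    obtain ⟨m01, h01⟩ := hint 0 1
    obtain ⟨m11, h11⟩ := hint 1 1
    set a : ℤ := m00 - N*m
    set b : ℤ := m11 - m00 + 2*N*m
    set c : ℤ := -m01 + m
    set d : ℤ := -m
    refine ⟨⟨(a:ℚ) + b/2, c/2, b/2 + d*N, c/2 + d⟩, ?_, ?_⟩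
    · have : (⟨(a:ℚ) + b/2, c/2, b/2 + d*N, c/2 + d⟩ : ℍ[ℚ, -(N:ℚ), 1]) =
        a • (1 : ℍ[ℚ, -(N:ℚ), 1]) + b • (⟨1/2, 0, 1/2, 0⟩ : ℍ[ℚ, -(N:ℚ), 1]) +
        c • (⟨0, 1/2, 0, 1/2⟩ : ℍ[ℚ, -(N:ℚ), 1]) + d • (⟨0, 0, (N:ℚ), 1⟩ : ℍ[ℚ, -(N:ℚ), 1]) := by
        ext <;> simp [QuaternionAlgebra.re_smul, QuaternionAlgebra.imI_smul,
          QuaternionAlgebra.imJ_smul, QuaternionAlgebra.imK_smul, zsmul_eq_mul] <;> ring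
      rw [this]
      refine Submodule.add_mem _ (Submodule.add_mem _ (Submodule.add_mem _ ?_ ?_) ?_) ?_ <;>
        exact Submodule.smul_mem _ _ (Submodule.subset_span (by simp))
    · ext i j
      fin_cases i <;> fin_cases j <;>
        simp [phiN, h00, h01, h11, hm] <;> push_cast [a, b, c, d] <;> ring
end

section
/- Let Δ, N be positive integers, p an odd prime with p ∤ ΔN, a ∈ ℤ with p ∣ a²ΔN + 1, and let q be an odd prime with q ∤ ΔNp. Let x, y ∈ ℤ_q satisfy x² − p·y² = −ΔN. Then the ℚ_q-linear map φ : ℍ[ℚ_q,−ΔN,p] → M₂(ℚ_q) sending α + β·i + γ·j + δ·k to !![α + βx − δpy, −βpy + γp + δpx; βy + γ − δx, α − βx + δpy] is a ℚ_q-algebra isomorphism, and the ℤ_q-submodule of M₂(ℚ_q) spanned by φ(e₁), φ(e₂), φ(e₃), φ(e₄) equals M₂(ℤ_q). -/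
open Quaternion

/-- The `ℚ_q`-linear map `φ : ℍ[ℚ_q, -ΔN, p] → M₂(ℚ_q)` sending `α + βi + γj + δk` to
`!![α + βx − δpy, −βpy + γp + δxp; βy + γ − δx, α − βx + δpy]`. -/
noncomputable def phi (q : ℕ) [Fact q.Prime] (Δ N p : ℕ) (x y : ℤ_[q]) :
    ℍ[ℚ_[q], -((Δ : ℚ_[q]) * N), (p : ℚ_[q])] → Matrix (Fin 2) (Fin 2) ℚ_[q] := fun h =>
  !![h.re + h.imI * (x : ℚ_[q]) - h.imK * (p : ℚ_[q]) * (y : ℚ_[q]),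
     -h.imI * (p : ℚ_[q]) * (y : ℚ_[q]) + h.imJ * (p : ℚ_[q]) + h.imK * (x : ℚ_[q]) * (p : ℚ_[q]);
     h.imI * (y : ℚ_[q]) + h.imJ - h.imK * (x : ℚ_[q]),
     h.re - h.imI * (x : ℚ_[q]) + h.imK * (p : ℚ_[q]) * (y : ℚ_[q])]

private lemma isUnit_intCast_padic {q : ℕ} [Fact q.Prime] {n : ℤ} (h : ¬ (q:ℤ) ∣ n) :
    IsUnit (n : ℤ_[q]) := by
  rw [PadicInt.isUnit_iff]
  refine le_antisymm (PadicInt.norm_le_one _) (not_lt.mp ?_)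
  rw [PadicInt.norm_int_lt_one_iff_dvd]
  exact h

set_option maxHeartbeats 4000000 in
/-- At an odd prime `q ∤ ΔNp` with `x² − py² = −ΔN` in `ℤ_q`, the map `φ` is a
`ℚ_q`-algebra isomorphism, and the `ℤ_q`-span of the images of the Hashimoto basis
`e₁, e₂, e₃, e₄` is all of `M₂(ℤ_q)`. -/
theorem stmt_5 (Δ N : ℕ) (hΔ : 0 < Δ) (hN : 0 < N)
    (p : ℕ) (hp : p.Prime) (hp2 : p ≠ 2) (hpΔN : ¬ p ∣ Δ * N)
    (a : ℤ) (ha : (p : ℤ) ∣ a ^ 2 * Δ * N + 1)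
    (q : ℕ) [Fact q.Prime] (hq2 : q ≠ 2) (hq : ¬ q ∣ Δ * N * p)
    (x y : ℤ_[q]) (hxy : x ^ 2 - (p : ℤ_[q]) * y ^ 2 = -((Δ : ℤ_[q]) * N)) :
    Function.Bijective (phi q Δ N p x y) ∧
    (∀ g h, phi q Δ N p x y (g * h) = phi q Δ N p x y g * phi q Δ N p x y h) ∧
    (∀ g h, phi q Δ N p x y (g + h) = phi q Δ N p x y g + phi q Δ N p x y h) ∧
    (∀ (c : ℚ_[q]) g, phi q Δ N p x y (c • g) = c • phi q Δ N p x y g) ∧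
    phi q Δ N p x y 1 = 1 ∧
    (Submodule.span ℤ_[q]
        {phi q Δ N p x y 1,
         phi q Δ N p x y ⟨1/2, 0, 1/2, 0⟩,
         phi q Δ N p x y ⟨0, 1/2, 0, 1/2⟩,
         phi q Δ N p x y ⟨0, 0, (a : ℚ_[q]) * Δ * N / p, 1 / (p : ℚ_[q])⟩} :
      Set (Matrix (Fin 2) (Fin 2) ℚ_[q])) =
      {γ | ∀ i j : Fin 2, ∃ z : ℤ_[q], γ i j = (z : ℚ_[q])} := by
  have hxyQ : (x:ℚ_[q])^2 - (p:ℚ_[q])*(y:ℚ_[q])^2 = -((Δ:ℚ_[q])*(N:ℚ_[q])) := by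
    have := congrArg (fun z : ℤ_[q] => (z:ℚ_[q])) hxy
    push_cast at this; exact this
  have hp0 : (p:ℚ_[q]) ≠ 0 := Nat.cast_ne_zero.mpr hp.pos.ne'
  have hΔ0 : (Δ:ℚ_[q]) ≠ 0 := Nat.cast_ne_zero.mpr hΔ.ne'
  have hN0 : (N:ℚ_[q]) ≠ 0 := Nat.cast_ne_zero.mpr hN.ne'
  have hD0 : ((Δ:ℚ_[q]) * (N:ℚ_[q])) ≠ 0 := mul_ne_zero hΔ0 hN0
  have h20 : (2:ℚ_[q]) ≠ 0 := two_ne_zero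
  have hsm : ∀ (c : ℤ_[q]) (r : ℚ_[q]), c • r = (c:ℚ_[q]) * r := fun c r => by
    rw [Algebra.smul_def, PadicInt.algebraMap_apply]
  -- units
  have hq2' : ¬ (q:ℤ) ∣ (2:ℤ) := by
    intro hd
    have h2 : q ∣ 2 := by exact_mod_cast hd
    rcases (Nat.prime_two.eq_one_or_self_of_dvd q h2) with h | h
    · exact (Fact.out : q.Prime).one_lt.ne' h
    · exact hq2 h
  have hqp' : ¬ (q:ℤ) ∣ (p:ℤ) := by
    intro hd
    exact hq (dvd_mul_of_dvd_right (by exact_mod_cast hd) _)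
  have hqD' : ¬ (q:ℤ) ∣ ((Δ:ℤ) * N) := by
    intro hd
    have : q ∣ Δ * N := by exact_mod_cast hd
    exact hq (Dvd.dvd.mul_right this _)
  obtain ⟨v2, hv2⟩ : ∃ v : ℤ_[q], v * 2 = 1 := by
    obtain ⟨v, hv⟩ := isUnit_iff_exists_inv'.mp (isUnit_intCast_padic hq2')
    exact ⟨v, by exact_mod_cast hv⟩
  obtain ⟨vp, hvp⟩ : ∃ v : ℤ_[q], v * p = 1 := by
    obtain ⟨v, hv⟩ := isUnit_iff_exists_inv'.mp (isUnit_intCast_padic hqp')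
    exact ⟨v, by exact_mod_cast hv⟩
  obtain ⟨vD, hvD⟩ : ∃ v : ℤ_[q], v * ((Δ:ℤ_[q]) * N) = 1 := by
    obtain ⟨v, hv⟩ := isUnit_iff_exists_inv'.mp (isUnit_intCast_padic hqD')
    exact ⟨v, by exact_mod_cast hv⟩
  have hv2Q : (v2:ℚ_[q]) * 2 = 1 := by
    have := congrArg (fun z : ℤ_[q] => (z:ℚ_[q])) hv2; push_cast at this; exact this
  have hvpQ : (vp:ℚ_[q]) * p = 1 := by
    have := congrArg (fun z : ℤ_[q] => (z:ℚ_[q])) hvp; push_cast at this; exact this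
  have hvDQ : (vD:ℚ_[q]) * ((Δ:ℚ_[q]) * N) = 1 := by
    have := congrArg (fun z : ℤ_[q] => (z:ℚ_[q])) hvD; push_cast at this; exact this
  have hv2' : (v2:ℚ_[q]) = 1/2 := by rw [eq_div_iff h20]; simpa using hv2Q
  have hcoe2 : ((2:ℤ_[q]):ℚ_[q]) = 2 := by norm_cast
  have hvp' : (vp:ℚ_[q]) = 1/(p:ℚ_[q]) := by rw [eq_div_iff hp0]; simpa using hvpQ
  refine ⟨?_, ?_, ?_, ?_, ?_, ?_⟩
  · -- bijective
    refine Function.bijective_iff_has_inverse.mpr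
      ⟨fun m => ⟨(m 0 0 + m 1 1)/2,
        -((x:ℚ_[q])*(m 0 0 - m 1 1)/2 + (y:ℚ_[q])*(m 0 1 - (p:ℚ_[q]) * m 1 0)/2)/((Δ:ℚ_[q])*N),
        m 1 0 + (m 0 1 - (p:ℚ_[q]) * m 1 0)/(2*(p:ℚ_[q])),
        -(((p:ℚ_[q])*(y:ℚ_[q]))*(m 0 0 - m 1 1)/2 + (x:ℚ_[q])*(m 0 1 - (p:ℚ_[q]) * m 1 0)/2)
          /((p:ℚ_[q])*((Δ:ℚ_[q])*N))⟩, ?_, ?_⟩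
    · intro h
      refine QuaternionAlgebra.ext ?_ ?_ ?_ ?_ <;>
        simp only [phi, Matrix.of_apply, Matrix.cons_val', Matrix.cons_val_zero,
          Matrix.cons_val_one, Matrix.head_cons, Matrix.head_fin_const, Matrix.empty_val',
          Matrix.cons_val_fin_one]
      · ring
      · rw [div_eq_iff hD0]; linear_combination (-h.imI) * hxyQ
      · field_simp; ring
      · rw [div_eq_iff (mul_ne_zero hp0 hD0)]
        linear_combination (-(p:ℚ_[q]) * h.imK) * hxyQ
    · intro m
      ext i j
      fin_cases i <;> fin_cases j <;>
        simp only [phi, Matrix.of_apply, Matrix.cons_val', Matrix.cons_val_zero,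
          Matrix.cons_val_one, Matrix.head_cons, Matrix.head_fin_const, Matrix.empty_val',
          Matrix.cons_val_fin_one, Fin.zero_eta, Fin.mk_one, Fin.isValue]
      · field_simp
        linear_combination (-(m 0 0 - m 1 1)) * hxyQ
      · field_simp
        linear_combination
          (-(m 0 1 - (p:ℚ_[q]) * m 1 0)) * hxyQ
      · field_simp
        linear_combination
          ((m 0 1 - (p:ℚ_[q]) * m 1 0)) * hxyQ
      · field_simp
        linear_combination ((m 0 0 - m 1 1)) * hxyQ
  · -- multiplicative
    intro g h
    ext i j
    fin_cases i <;> fin_cases j <;>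
      simp [phi, Matrix.of_apply, QuaternionAlgebra.re_mul, QuaternionAlgebra.imI_mul,
        QuaternionAlgebra.imJ_mul, QuaternionAlgebra.imK_mul, Matrix.mul_apply,
        Fin.sum_univ_two, Matrix.cons_val', Matrix.cons_val_zero, Matrix.cons_val_one,
        Matrix.head_cons, Matrix.head_fin_const, Matrix.empty_val', Matrix.cons_val_fin_one,
        Fin.zero_eta, Fin.mk_one, Fin.isValue]
    · linear_combination ((p:ℚ_[q]) * g.imK * h.imK - g.imI * h.imI) * hxyQ
    · linear_combination ((p:ℚ_[q]) * (g.imK * h.imI - g.imI * h.imK)) * hxyQ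
    · linear_combination (g.imK * h.imI - g.imI * h.imK) * hxyQ
    · linear_combination ((p:ℚ_[q]) * g.imK * h.imK - g.imI * h.imI) * hxyQ
  · -- additive
    intro g h
    ext i j
    fin_cases i <;> fin_cases j <;>
      simp [phi, Matrix.add_apply, Fin.zero_eta, Fin.mk_one, Fin.isValue] <;> ring
  · -- smul
    intro c g
    ext i j
    fin_cases i <;> fin_cases j <;>
      simp [phi, Matrix.smul_apply, smul_eq_mul, Fin.zero_eta, Fin.mk_one, Fin.isValue] <;> ring
  · -- one
    ext i j
    rw [show (1 : Matrix (Fin 2) (Fin 2) ℚ_[q]) = !![1,0;0,1] by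
      ext i j; fin_cases i <;> fin_cases j <;> simp [Matrix.one_apply]]
    fin_cases i <;> fin_cases j <;>
      simp [phi, Fin.zero_eta, Fin.mk_one, Fin.isValue]
  · -- span
    have hG1 : phi q Δ N p x y 1 = !![(1:ℚ_[q]),0;0,1] := by
      ext i j; fin_cases i <;> fin_cases j <;> simp [phi]
    have hG2 : phi q Δ N p x y ⟨1/2, 0, 1/2, 0⟩ =
        !![(1:ℚ_[q])/2, (p:ℚ_[q])/2; 1/2, 1/2] := by
      ext i j; fin_cases i <;> fin_cases j <;> simp [phi] <;> ring
    have hG3 : phi q Δ N p x y ⟨0, 1/2, 0, 1/2⟩ =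
        !![((x:ℚ_[q]) - (p:ℚ_[q])*(y:ℚ_[q]))/2, ((p:ℚ_[q])*(x:ℚ_[q]) - (p:ℚ_[q])*(y:ℚ_[q]))/2;
           ((y:ℚ_[q]) - (x:ℚ_[q]))/2, ((p:ℚ_[q])*(y:ℚ_[q]) - (x:ℚ_[q]))/2] := by
      ext i j; fin_cases i <;> fin_cases j <;> simp [phi] <;> ring
    have hG4 : phi q Δ N p x y ⟨0, 0, (a : ℚ_[q]) * Δ * N / p, 1 / (p : ℚ_[q])⟩ =
        !![-(y:ℚ_[q]), (a:ℚ_[q])*Δ*N + (x:ℚ_[q]);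
           ((a:ℚ_[q])*Δ*N - (x:ℚ_[q]))/(p:ℚ_[q]), (y:ℚ_[q])] := by
      ext i j; fin_cases i <;> fin_cases j <;> simp [phi] <;> field_simp <;> ring
    rw [hG1, hG2, hG3, hG4]
    have hM : ∀ (z11 z12 z21 z22 : ℤ_[q]) (γ : Matrix (Fin 2) (Fin 2) ℚ_[q]),
        γ = !![(z11:ℚ_[q]), (z12:ℚ_[q]); (z21:ℚ_[q]), (z22:ℚ_[q])] →
        ∀ i j : Fin 2, ∃ z : ℤ_[q], γ i j = (z : ℚ_[q]) := by
      rintro z11 z12 z21 z22 _ rfl i j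
      fin_cases i <;> fin_cases j
      exacts [⟨z11, by simp⟩, ⟨z12, by simp⟩, ⟨z21, by simp⟩, ⟨z22, by simp⟩]
    ext γ
    simp only [SetLike.mem_coe, Set.mem_setOf_eq]
    constructor
    · intro hγ
      induction hγ using Submodule.span_induction with
      | mem g hg =>
        simp only [Set.mem_insert_iff, Set.mem_singleton_iff] at hg
        rcases hg with rfl | rfl | rfl | rfl
        · exact hM 1 0 0 1 _ (by ext i j; fin_cases i <;> fin_cases j <;> simp)
        · refine hM v2 ((p:ℤ_[q])*v2) v2 v2 _ ?_
          ext i j; fin_cases i <;> fin_cases j <;> simp <;> (try push_cast [hv2', hvp', hcoe2]) <;> (try ring1)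
        · refine hM ((x - p*y)*v2) ((p*x - p*y)*v2) ((y - x)*v2) ((p*y - x)*v2) _ ?_
          ext i j; fin_cases i <;> fin_cases j <;> simp <;> (try push_cast [hv2', hvp', hcoe2]) <;> (try ring1)
        · refine hM (-y) ((a:ℤ_[q])*Δ*N + x) (((a:ℤ_[q])*Δ*N - x)*vp) y _ ?_
          ext i j; fin_cases i <;> fin_cases j <;> simp <;> (try push_cast [hv2', hvp', hcoe2]) <;> (try ring1)
      | zero => exact fun i j => ⟨0, by simp⟩
      | add g h _ _ ihg ihh =>
        intro i j
        obtain ⟨z1, e1⟩ := ihg i j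
        obtain ⟨z2, e2⟩ := ihh i j
        exact ⟨z1 + z2, by rw [Matrix.add_apply, e1, e2]; push_cast; ring⟩
      | smul c g _ ihg =>
        intro i j
        obtain ⟨z, e⟩ := ihg i j
        exact ⟨c * z, by rw [Matrix.smul_apply, hsm, e]; push_cast; ring⟩
    · intro hγ
      obtain ⟨z00, h00⟩ := hγ 0 0
      obtain ⟨z01, h01⟩ := hγ 0 1
      obtain ⟨z10, h10⟩ := hγ 1 0
      obtain ⟨z11, h11⟩ := hγ 1 1
      set S : Set (Matrix (Fin 2) (Fin 2) ℚ_[q]) :=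
          {!![(1:ℚ_[q]),0;0,1],
            !![(1:ℚ_[q])/2, (p:ℚ_[q])/2; 1/2, 1/2],
            !![((x:ℚ_[q]) - (p:ℚ_[q])*(y:ℚ_[q]))/2, ((p:ℚ_[q])*(x:ℚ_[q]) - (p:ℚ_[q])*(y:ℚ_[q]))/2;
               ((y:ℚ_[q]) - (x:ℚ_[q]))/2, ((p:ℚ_[q])*(y:ℚ_[q]) - (x:ℚ_[q]))/2],
            !![-(y:ℚ_[q]), (a:ℚ_[q])*Δ*N + (x:ℚ_[q]);
               ((a:ℚ_[q])*Δ*N - (x:ℚ_[q]))/(p:ℚ_[q]), (y:ℚ_[q])]} with hS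
      have h1 : !![(1:ℚ_[q]),0;0,1] ∈ Submodule.span ℤ_[q] S :=
        Submodule.subset_span (by rw [hS]; exact Set.mem_insert _ _)
      have h2 : !![(1:ℚ_[q])/2, (p:ℚ_[q])/2; 1/2, 1/2] ∈ Submodule.span ℤ_[q] S :=
        Submodule.subset_span (by rw [hS]; exact Set.mem_insert_of_mem _ (Set.mem_insert _ _))
      have h3 : !![((x:ℚ_[q]) - (p:ℚ_[q])*(y:ℚ_[q]))/2, ((p:ℚ_[q])*(x:ℚ_[q]) - (p:ℚ_[q])*(y:ℚ_[q]))/2;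
               ((y:ℚ_[q]) - (x:ℚ_[q]))/2, ((p:ℚ_[q])*(y:ℚ_[q]) - (x:ℚ_[q]))/2]
          ∈ Submodule.span ℤ_[q] S :=
        Submodule.subset_span (by
          rw [hS]
          exact Set.mem_insert_of_mem _ (Set.mem_insert_of_mem _ (Set.mem_insert _ _)))
      have h4 : !![-(y:ℚ_[q]), (a:ℚ_[q])*Δ*N + (x:ℚ_[q]);
               ((a:ℚ_[q])*Δ*N - (x:ℚ_[q]))/(p:ℚ_[q]), (y:ℚ_[q])]
          ∈ Submodule.span ℤ_[q] S :=
        Submodule.subset_span (by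
          rw [hS]
          exact Set.mem_insert_of_mem _ (Set.mem_insert_of_mem _
            (Set.mem_insert_of_mem _ rfl)))
      have hm2 : !![(0:ℚ_[q]),(p:ℚ_[q]);1,0] ∈ Submodule.span ℤ_[q] S := by
        have e : !![(0:ℚ_[q]),(p:ℚ_[q]);1,0] =
            (2:ℤ_[q]) • !![(1:ℚ_[q])/2, (p:ℚ_[q])/2; 1/2, 1/2] - !![(1:ℚ_[q]),0;0,1] := by
          ext i j
          fin_cases i <;> fin_cases j <;>
            simp [Matrix.sub_apply, Matrix.smul_apply, hsm] <;> (try push_cast [hcoe2]) <;>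
            (first
            | ring1
            | linear_combination (-2:ℚ_[q])*hxyQ
            | linear_combination (2:ℚ_[q])*hxyQ
            | linear_combination ((vD:ℚ_[q])*((Δ:ℚ_[q])*(N:ℚ_[q])))*hv2Q + hvDQ
            | linear_combination (-((vD:ℚ_[q])*((Δ:ℚ_[q])*(N:ℚ_[q]))))*hv2Q - hvDQ
            | linear_combination hvpQ
            | linear_combination -hvpQ
            | (field_simp; ring1))
        rw [e]; exact sub_mem (Submodule.smul_mem _ _ h2) h1
      have hm3 : !![(0:ℚ_[q]),0; 2*((y:ℚ_[q]) - (x:ℚ_[q])), 2*((p:ℚ_[q])*(y:ℚ_[q]) - (x:ℚ_[q]))]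
          ∈ Submodule.span ℤ_[q] S := by
        have e : !![(0:ℚ_[q]),0; 2*((y:ℚ_[q]) - (x:ℚ_[q])), 2*((p:ℚ_[q])*(y:ℚ_[q]) - (x:ℚ_[q]))] =
            (2:ℤ_[q]) • !![((x:ℚ_[q]) - (p:ℚ_[q])*(y:ℚ_[q]))/2,
                ((p:ℚ_[q])*(x:ℚ_[q]) - (p:ℚ_[q])*(y:ℚ_[q]))/2;
                ((y:ℚ_[q]) - (x:ℚ_[q]))/2, ((p:ℚ_[q])*(y:ℚ_[q]) - (x:ℚ_[q]))/2]
              - (2*(x - y)) • !![(1:ℚ_[q])/2, (p:ℚ_[q])/2; 1/2, 1/2]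
              + (y*((p:ℤ_[q]) - 1)) • !![(1:ℚ_[q]),0;0,1] := by
          ext i j
          fin_cases i <;> fin_cases j <;>
            simp [Matrix.sub_apply, Matrix.add_apply, Matrix.smul_apply, hsm] <;> (try push_cast [hcoe2]) <;>
            (first
            | ring1
            | linear_combination (-2:ℚ_[q])*hxyQ
            | linear_combination (2:ℚ_[q])*hxyQ
            | linear_combination ((vD:ℚ_[q])*((Δ:ℚ_[q])*(N:ℚ_[q])))*hv2Q + hvDQ
            | linear_combination (-((vD:ℚ_[q])*((Δ:ℚ_[q])*(N:ℚ_[q]))))*hv2Q - hvDQ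
            | linear_combination hvpQ
            | linear_combination -hvpQ
            | (field_simp; ring1))
        rw [e]
        exact add_mem (sub_mem (Submodule.smul_mem _ _ h3) (Submodule.smul_mem _ _ h2))
          (Submodule.smul_mem _ _ h1)
      have hm4 : !![(0:ℚ_[q]),0; -2*(x:ℚ_[q]), 2*((p:ℚ_[q])*(y:ℚ_[q]))]
          ∈ Submodule.span ℤ_[q] S := by
        have e : !![(0:ℚ_[q]),0; -2*(x:ℚ_[q]), 2*((p:ℚ_[q])*(y:ℚ_[q]))] =
            (p:ℤ_[q]) • !![-(y:ℚ_[q]), (a:ℚ_[q])*Δ*N + (x:ℚ_[q]);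
                ((a:ℚ_[q])*Δ*N - (x:ℚ_[q]))/(p:ℚ_[q]), (y:ℚ_[q])]
              - ((a:ℤ_[q])*Δ*N + x) • !![(0:ℚ_[q]),(p:ℚ_[q]);1,0]
              + ((p:ℤ_[q])*y) • !![(1:ℚ_[q]),0;0,1] := by
          ext i j
          fin_cases i <;> fin_cases j <;>
            simp [Matrix.sub_apply, Matrix.add_apply, Matrix.smul_apply, hsm] <;> (try push_cast [hcoe2]) <;>
            (first
            | ring1
            | linear_combination (-2:ℚ_[q])*hxyQ
            | linear_combination (2:ℚ_[q])*hxyQ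
            | linear_combination ((vD:ℚ_[q])*((Δ:ℚ_[q])*(N:ℚ_[q])))*hv2Q + hvDQ
            | linear_combination (-((vD:ℚ_[q])*((Δ:ℚ_[q])*(N:ℚ_[q]))))*hv2Q - hvDQ
            | linear_combination hvpQ
            | linear_combination -hvpQ
            | (field_simp; ring1))
        rw [e]
        exact add_mem (sub_mem (Submodule.smul_mem _ _ h4) (Submodule.smul_mem _ _ hm2))
          (Submodule.smul_mem _ _ h1)
      have hm6 : !![(0:ℚ_[q]),0; 2*((Δ:ℚ_[q])*(N:ℚ_[q])), 0] ∈ Submodule.span ℤ_[q] S := by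
        have e : !![(0:ℚ_[q]),0; 2*((Δ:ℚ_[q])*(N:ℚ_[q])), 0] =
            ((p:ℤ_[q])*y) • !![(0:ℚ_[q]),0; 2*((y:ℚ_[q]) - (x:ℚ_[q])),
                2*((p:ℚ_[q])*(y:ℚ_[q]) - (x:ℚ_[q]))]
              - ((p:ℤ_[q])*y - x) • !![(0:ℚ_[q]),0; -2*(x:ℚ_[q]), 2*((p:ℚ_[q])*(y:ℚ_[q]))] := by
          ext i j
          fin_cases i <;> fin_cases j <;>
            simp [Matrix.sub_apply, Matrix.smul_apply, hsm] <;> (try push_cast [hcoe2]) <;>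
            (first
            | ring1
            | linear_combination (-2:ℚ_[q])*hxyQ
            | linear_combination (2:ℚ_[q])*hxyQ
            | linear_combination ((vD:ℚ_[q])*((Δ:ℚ_[q])*(N:ℚ_[q])))*hv2Q + hvDQ
            | linear_combination (-((vD:ℚ_[q])*((Δ:ℚ_[q])*(N:ℚ_[q]))))*hv2Q - hvDQ
            | linear_combination hvpQ
            | linear_combination -hvpQ
            | (field_simp; ring1))
        rw [e]
        exact sub_mem (Submodule.smul_mem _ _ hm3) (Submodule.smul_mem _ _ hm4)
      have hm7 : !![(0:ℚ_[q]),0; 0, 2*((Δ:ℚ_[q])*(N:ℚ_[q]))] ∈ Submodule.span ℤ_[q] S := by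
        have e : !![(0:ℚ_[q]),0; 0, 2*((Δ:ℚ_[q])*(N:ℚ_[q]))] =
            x • !![(0:ℚ_[q]),0; 2*((y:ℚ_[q]) - (x:ℚ_[q])), 2*((p:ℚ_[q])*(y:ℚ_[q]) - (x:ℚ_[q]))]
              + (y - x) • !![(0:ℚ_[q]),0; -2*(x:ℚ_[q]), 2*((p:ℚ_[q])*(y:ℚ_[q]))] := by
          ext i j
          fin_cases i <;> fin_cases j <;>
            simp [Matrix.add_apply, Matrix.smul_apply, hsm] <;> (try push_cast [hcoe2]) <;>
            (first
            | ring1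
            | linear_combination (-2:ℚ_[q])*hxyQ
            | linear_combination (2:ℚ_[q])*hxyQ
            | linear_combination ((vD:ℚ_[q])*((Δ:ℚ_[q])*(N:ℚ_[q])))*hv2Q + hvDQ
            | linear_combination (-((vD:ℚ_[q])*((Δ:ℚ_[q])*(N:ℚ_[q]))))*hv2Q - hvDQ
            | linear_combination hvpQ
            | linear_combination -hvpQ
            | (field_simp; ring1))
        rw [e]
        exact add_mem (Submodule.smul_mem _ _ hm3) (Submodule.smul_mem _ _ hm4)
      have hTC : !![(0:ℚ_[q]),0;1,0] ∈ Submodule.span ℤ_[q] S := by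
        have e : !![(0:ℚ_[q]),0;1,0] =
            (v2*vD) • !![(0:ℚ_[q]),0; 2*((Δ:ℚ_[q])*(N:ℚ_[q])), 0] := by
          ext i j
          fin_cases i <;> fin_cases j <;>
            simp [Matrix.smul_apply, hsm] <;> (try push_cast [hcoe2]) <;>
            (first
            | ring1
            | linear_combination (-2:ℚ_[q])*hxyQ
            | linear_combination (2:ℚ_[q])*hxyQ
            | linear_combination ((vD:ℚ_[q])*((Δ:ℚ_[q])*(N:ℚ_[q])))*hv2Q + hvDQ
            | linear_combination (-((vD:ℚ_[q])*((Δ:ℚ_[q])*(N:ℚ_[q]))))*hv2Q - hvDQ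
            | linear_combination hvpQ
            | linear_combination -hvpQ
            | (field_simp; ring1))
        rw [e]; exact Submodule.smul_mem _ _ hm6
      have hTD : !![(0:ℚ_[q]),0;0,1] ∈ Submodule.span ℤ_[q] S := by
        have e : !![(0:ℚ_[q]),0;0,1] =
            (v2*vD) • !![(0:ℚ_[q]),0; 0, 2*((Δ:ℚ_[q])*(N:ℚ_[q]))] := by
          ext i j
          fin_cases i <;> fin_cases j <;>
            simp [Matrix.smul_apply, hsm] <;> (try push_cast [hcoe2]) <;>
            (first
            | ring1
            | linear_combination (-2:ℚ_[q])*hxyQ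
            | linear_combination (2:ℚ_[q])*hxyQ
            | linear_combination ((vD:ℚ_[q])*((Δ:ℚ_[q])*(N:ℚ_[q])))*hv2Q + hvDQ
            | linear_combination (-((vD:ℚ_[q])*((Δ:ℚ_[q])*(N:ℚ_[q]))))*hv2Q - hvDQ
            | linear_combination hvpQ
            | linear_combination -hvpQ
            | (field_simp; ring1))
        rw [e]; exact Submodule.smul_mem _ _ hm7
      have hTB : !![(0:ℚ_[q]),1;0,0] ∈ Submodule.span ℤ_[q] S := by
        have e : !![(0:ℚ_[q]),1;0,0] =
            vp • (!![(0:ℚ_[q]),(p:ℚ_[q]);1,0] - !![(0:ℚ_[q]),0;1,0]) := by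
          ext i j
          fin_cases i <;> fin_cases j <;>
            simp [Matrix.sub_apply, Matrix.smul_apply, hsm] <;> (try push_cast [hcoe2]) <;>
            (first
            | ring1
            | linear_combination (-2:ℚ_[q])*hxyQ
            | linear_combination (2:ℚ_[q])*hxyQ
            | linear_combination ((vD:ℚ_[q])*((Δ:ℚ_[q])*(N:ℚ_[q])))*hv2Q + hvDQ
            | linear_combination (-((vD:ℚ_[q])*((Δ:ℚ_[q])*(N:ℚ_[q]))))*hv2Q - hvDQ
            | linear_combination hvpQ
            | linear_combination -hvpQ
            | (field_simp; ring1))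
        rw [e]; exact Submodule.smul_mem _ _ (sub_mem hm2 hTC)
      have hTA : !![(1:ℚ_[q]),0;0,0] ∈ Submodule.span ℤ_[q] S := by
        have e : !![(1:ℚ_[q]),0;0,0] = !![(1:ℚ_[q]),0;0,1] - !![(0:ℚ_[q]),0;0,1] := by
          ext i j
          fin_cases i <;> fin_cases j <;> simp [Matrix.sub_apply]
        rw [e]; exact sub_mem h1 hTD
      have hdecomp : γ = z00 • !![(1:ℚ_[q]),0;0,0] + z01 • !![(0:ℚ_[q]),1;0,0]
          + z10 • !![(0:ℚ_[q]),0;1,0] + z11 • !![(0:ℚ_[q]),0;0,1] := by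
        ext i j
        fin_cases i <;> fin_cases j <;>
          simp [Matrix.add_apply, Matrix.smul_apply, hsm, Fin.zero_eta, Fin.mk_one,
            Fin.isValue, h00, h01, h10, h11]
      rw [hdecomp]
      exact add_mem (add_mem (add_mem (Submodule.smul_mem _ _ hTA)
        (Submodule.smul_mem _ _ hTB)) (Submodule.smul_mem _ _ hTC))
        (Submodule.smul_mem _ _ hTD)
end

section
/- Let p be a prime with p ≡ 1 (mod 4), and let N, M be positive integers such that for every odd prime q dividing N·M the Legendre symbol (p/q) equals 1, and such that p ≡ 1 (mod 8) whenever 2 divides N·M. Then the quadratic form f(β,δ) = M·β² − p·M·δ² represents N over ℚ: there exist β, δ ∈ ℚ with M·β² − p·M·δ² = N. -/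
private lemma prime_not_sq {r : ℕ} (hr : r.Prime) (s : ℕ) : s * s ≠ r := by
  intro h
  rcases hr.eq_one_or_self_of_dvd s ⟨s, h.symm⟩ with h1 | h1
  · subst h1; simp at h; exact hr.one_lt.ne' h.symm
  · subst h1; nlinarith [hr.one_lt]

private lemma mul_primes_not_sq {p q : ℕ} (hp : p.Prime) (hq : q.Prime) (hne : p ≠ q)
    (s : ℕ) : s * s ≠ p * q := by
  intro h
  have hpd : p ∣ s := hp.dvd_of_dvd_pow (n := 2) (by rw [pow_two, h]; exact Dvd.intro q rfl)
  obtain ⟨s', rfl⟩ := hpd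
  have h2 : p * (p * (s' * s')) = p * q := by rw [← h]; ring
  have h3 : p * (s' * s') = q := Nat.eq_of_mul_eq_mul_left hp.pos h2
  exact hne ((Nat.prime_dvd_prime_iff_eq hp hq).mp ⟨s' * s', h3.symm⟩)

private lemma pigeon (m : ℕ) (hm : m ≠ 0) (a b : ℤ) (A B C : ℕ)
    (hcard : m < (A + 1) * ((B + 1) * (C + 1))) :
    ∃ x y z : ℤ, ¬(x = 0 ∧ y = 0 ∧ z = 0) ∧ |x| ≤ A ∧ |y| ≤ B ∧ |z| ≤ C ∧
      (m : ℤ) ∣ (x - a * y - b * z) := by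
  haveI : NeZero m := ⟨hm⟩
  classical
  set s : Finset (ℕ × ℕ × ℕ) :=
    Finset.range (A + 1) ×ˢ Finset.range (B + 1) ×ˢ Finset.range (C + 1) with hs_def
  set f : ℕ × ℕ × ℕ → ZMod m := fun t =>
    (t.1 : ZMod m) - (a : ZMod m) * (t.2.1 : ZMod m) - (b : ZMod m) * (t.2.2 : ZMod m)
  have hcard' : (Finset.univ : Finset (ZMod m)).card < s.card := by
    rw [Finset.card_univ, ZMod.card, hs_def]
    simpa using hcard
  obtain ⟨u, hu, v, hv, huv, heq⟩ :=
    Finset.exists_ne_map_eq_of_card_lt_of_maps_to hcard' (fun x _ => Finset.mem_univ (f x))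
  obtain ⟨i, j, k⟩ := u
  obtain ⟨i', j', k'⟩ := v
  simp only [hs_def, Finset.mem_product, Finset.mem_range] at hu hv
  refine ⟨(i : ℤ) - i', (j : ℤ) - j', (k : ℤ) - k', ?_, ?_, ?_, ?_, ?_⟩
  · rintro ⟨h1, h2, h3⟩
    apply huv
    have : i = i' ∧ j = j' ∧ k = k' := by omega
    simp [this.1, this.2.1, this.2.2]
  · rw [abs_le]; omega
  · rw [abs_le]; omega
  · rw [abs_le]; omega
  · have : ((((i : ℤ) - i') - a * ((j : ℤ) - j') - b * ((k : ℤ) - k') : ℤ) : ZMod m) = 0 := by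
      push_cast
      have h1 : f (i, j, k) = f (i', j', k') := heq
      simp only [f] at h1
      linear_combination h1
    exact (ZMod.intCast_zmod_eq_zero_iff_dvd _ m).mp this

set_option maxHeartbeats 1600000 in
/-- Key lemma: if `q ≠ p` are primes, `p` is a square mod `q` and `q` is a square mod `p`,
then `q` is rationally represented by `x² - p y²`. -/
private lemma key_rep (p q : ℕ) (hp : p.Prime) (hq : q.Prime) (hne : p ≠ q)
    (t w : ℤ) (ht : (q : ℤ) ∣ t ^ 2 - p) (hw : (p : ℤ) ∣ w ^ 2 - q) :
    ∃ x y : ℚ, x ^ 2 - p * y ^ 2 = q := by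
  have hco : IsCoprime (p : ℤ) (q : ℤ) :=
    Nat.isCoprime_iff_coprime.mpr ((Nat.coprime_primes hp hq).mpr hne)
  obtain ⟨U, V, hUV⟩ := id hco
  set a : ℤ := t * (U * p) with ha_def
  set b : ℤ := w * (V * q) with hb_def
  -- divisibility facts
  have hqa : (q : ℤ) ∣ a - t := by
    exact ⟨-(t * V), by rw [ha_def]; linear_combination t * hUV⟩
  have hpa : (p : ℤ) ∣ a := ⟨t * U, by rw [ha_def]; ring⟩
  have hpb : (p : ℤ) ∣ b - w := by
    exact ⟨-(w * U), by rw [hb_def]; linear_combination w * hUV⟩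
  have hqb : (q : ℤ) ∣ b := ⟨w * V, by rw [hb_def]; ring⟩
  have d1 : (p : ℤ) * q ∣ a ^ 2 - p := by
    refine hco.mul_dvd ?_ ?_
    · exact dvd_sub (Dvd.dvd.pow hpa two_ne_zero) (dvd_refl _)
    · have h1 : (q : ℤ) ∣ a ^ 2 - t ^ 2 := by
        have : a ^ 2 - t ^ 2 = (a - t) * (a + t) := by ring
        rw [this]; exact Dvd.dvd.mul_right hqa _
      have := dvd_add h1 ht
      simpa using this
  have d2 : (p : ℤ) * q ∣ a * b := mul_dvd_mul hpa hqb
  have d3 : (p : ℤ) * q ∣ b ^ 2 - q := by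
    refine hco.mul_dvd ?_ ?_
    · have h1 : (p : ℤ) ∣ b ^ 2 - w ^ 2 := by
        have : b ^ 2 - w ^ 2 = (b - w) * (b + w) := by ring
        rw [this]; exact Dvd.dvd.mul_right hpb _
      have := dvd_add h1 hw
      simpa using this
    · exact dvd_sub (Dvd.dvd.pow hqb two_ne_zero) (dvd_refl _)
  -- pigeonhole
  set A := Nat.sqrt (p * q)
  set B := Nat.sqrt q
  set C := Nat.sqrt p
  have hA : A * A ≤ p * q := Nat.sqrt_le _
  have hB : B * B ≤ q := Nat.sqrt_le _
  have hC : C * C ≤ p := Nat.sqrt_le _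
  have hA' : A * A < p * q := lt_of_le_of_ne hA (mul_primes_not_sq hp hq hne A)
  have hB' : B * B < q := lt_of_le_of_ne hB (prime_not_sq hq B)
  have hC' : C * C < p := lt_of_le_of_ne hC (prime_not_sq hp C)
  have hcard : p * q < (A + 1) * ((B + 1) * (C + 1)) := by
    have h1 : p * q < (A + 1) * (A + 1) := Nat.lt_succ_sqrt _
    have h2 : q < (B + 1) * (B + 1) := Nat.lt_succ_sqrt _
    have h3 : p < (C + 1) * (C + 1) := Nat.lt_succ_sqrt _
    by_contra hcon
    push_neg at hcon
    have := Nat.mul_le_mul hcon hcon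
    nlinarith [Nat.mul_lt_mul'' h2 h3, Nat.mul_lt_mul'' h1 (Nat.mul_lt_mul'' h2 h3)]
  obtain ⟨x, y, z, hnz, hxA, hyB, hzC, hdvd⟩ :=
    pigeon (p * q) (Nat.mul_ne_zero hp.pos.ne' hq.pos.ne') a b A B C (by exact_mod_cast hcard)
  -- the quadratic form value is divisible by p*q
  have hx2 : x ^ 2 < (p : ℤ) * q := by
    have : x ^ 2 ≤ (A : ℤ) * A := by
      rw [abs_le] at hxA; nlinarith
    calc x ^ 2 ≤ (A : ℤ) * A := this
      _ < (p : ℤ) * q := by exact_mod_cast hA'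
  have hy2 : y ^ 2 < (q : ℤ) := by
    have : y ^ 2 ≤ (B : ℤ) * B := by rw [abs_le] at hyB; nlinarith
    calc y ^ 2 ≤ (B : ℤ) * B := this
      _ < (q : ℤ) := by exact_mod_cast hB'
  have hz2 : z ^ 2 < (p : ℤ) := by
    have : z ^ 2 ≤ (C : ℤ) * C := by rw [abs_le] at hzC; nlinarith
    calc z ^ 2 ≤ (C : ℤ) * C := this
      _ < (p : ℤ) := by exact_mod_cast hC'
  have hdvd' : (p : ℤ) * q ∣ x ^ 2 - p * y ^ 2 - q * z ^ 2 := by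
    have hdec : x ^ 2 - p * y ^ 2 - q * z ^ 2 =
        (x - a * y - b * z) * (x + a * y + b * z) + (a ^ 2 - p) * y ^ 2 +
          (a * b) * (2 * (y * z)) + (b ^ 2 - q) * z ^ 2 := by ring
    rw [hdec]
    have hdvd2 : (p : ℤ) * q ∣ (x - a * y - b * z) := by
      have : ((p * q : ℕ) : ℤ) = (p : ℤ) * q := by push_cast; ring
      rwa [this] at hdvd
    exact dvd_add (dvd_add (dvd_add (hdvd2.mul_right _) (d1.mul_right _))
      (d2.mul_right _)) (d3.mul_right _)
  obtain ⟨e, he⟩ := hdvd'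
  have hpq0 : (0 : ℤ) < (p : ℤ) * q := by
    have h1 : (0 : ℤ) < p := by exact_mod_cast hp.pos
    have h2 : (0 : ℤ) < q := by exact_mod_cast hq.pos
    positivity
  have hp0' : (0 : ℤ) < p := by exact_mod_cast hp.pos
  have hq0' : (0 : ℤ) < q := by exact_mod_cast hq.pos
  have hecase : e = 0 ∨ e = -1 := by
    have hpy : (p : ℤ) * y ^ 2 < (p : ℤ) * q := by
      have := mul_lt_mul_of_pos_left hy2 hp0'
      linarith
    have hqz : (q : ℤ) * z ^ 2 < (p : ℤ) * q := by
      calc (q : ℤ) * z ^ 2 < (q : ℤ) * p := mul_lt_mul_of_pos_left hz2 hq0'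
        _ = (p : ℤ) * q := mul_comm _ _
    have hpy0 : (0 : ℤ) ≤ (p : ℤ) * y ^ 2 := by positivity
    have hqz0 : (0 : ℤ) ≤ (q : ℤ) * z ^ 2 := by positivity
    have hx0 : (0 : ℤ) ≤ x ^ 2 := sq_nonneg x
    have h1 : (p : ℤ) * q * e < (p : ℤ) * q * 1 := by
      have : (p : ℤ) * q * e = x ^ 2 - p * y ^ 2 - q * z ^ 2 := he.symm
      linarith
    have h2 : (p : ℤ) * q * (-2) < (p : ℤ) * q * e := by
      have : (p : ℤ) * q * e = x ^ 2 - p * y ^ 2 - q * z ^ 2 := he.symm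
      linarith
    have h1' : e < 1 := lt_of_mul_lt_mul_left h1 (le_of_lt hpq0)
    have h2' : -2 < e := lt_of_mul_lt_mul_left h2 (le_of_lt hpq0)
    omega
  rcases hecase with rfl | rfl
  · -- x² - p y² - q z² = 0
    have hf0 : x ^ 2 - (p : ℤ) * y ^ 2 - q * z ^ 2 = 0 := by rw [he]; ring
    by_cases hz : z = 0
    · -- degenerate: x² = p y², contradiction
      exfalso
      subst hz
      have hxy : x ^ 2 = (p : ℤ) * y ^ 2 := by linarith [hf0]
      have hy0 : y ≠ 0 := by
        rintro rfl
        have hx2' : x ^ 2 = 0 := by simpa using hxy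
        exact hnz ⟨pow_eq_zero_iff two_ne_zero |>.mp hx2', rfl, rfl⟩
      have hnat : x.natAbs ^ 2 = p * y.natAbs ^ 2 := by
        have := congrArg Int.natAbs hxy
        simpa [Int.natAbs_mul, Int.natAbs_pow] using this
      have hY0 : y.natAbs ≠ 0 := fun h0 => hy0 (Int.natAbs_eq_zero.mp h0)
      have hfac := congrArg (fun n : ℕ => n.factorization p) hnat
      simp only [Nat.factorization_pow, Nat.factorization_mul hp.ne_zero (pow_ne_zero 2 hY0),
        Finsupp.coe_add, Finsupp.coe_smul, Pi.add_apply, Pi.smul_apply, smul_eq_mul,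
        Nat.Prime.factorization_self hp] at hfac
      omega
    · refine ⟨(x : ℚ) / z, (y : ℚ) / z, ?_⟩
      have hzQ : (z : ℚ) ≠ 0 := Int.cast_ne_zero.mpr hz
      have hfQ : (x : ℚ) ^ 2 - p * y ^ 2 - q * z ^ 2 = 0 := by exact_mod_cast hf0
      field_simp
      linear_combination hfQ
  · -- x² - p y² - q z² = -p q
    have hf0 : x ^ 2 - (p : ℤ) * y ^ 2 = (q : ℤ) * (z ^ 2 - p) := by rw [← sub_eq_zero]; linarith [he]
    have hd0 : (z : ℚ) ^ 2 - p ≠ 0 := by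
      have : (z : ℚ) ^ 2 < p := by exact_mod_cast hz2
      intro h; rw [sub_eq_zero] at h; rw [h] at this; exact lt_irrefl _ this
    refine ⟨((x : ℚ) * z - p * y) / ((z : ℚ) ^ 2 - p), ((y : ℚ) * z - x) / ((z : ℚ) ^ 2 - p), ?_⟩
    have hfQ : (x : ℚ) ^ 2 - p * y ^ 2 = q * ((z : ℚ) ^ 2 - p) := by exact_mod_cast hf0
    field_simp
    linear_combination ((z : ℚ) ^ 2 - p) * hfQ

/-- If `p ≡ 1 (mod 4)`, `(p/q) = 1` for every odd prime `q ∣ N·M`, and `p ≡ 1 (mod 8)`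
whenever `2 ∣ N·M`, then the quadratic form `M·β² − p·M·δ²` represents `N` over `ℚ`. -/
theorem stmt_14 (p : ℕ) (hp : p.Prime) (hp4 : p % 4 = 1)
    (N M : ℕ) (hN : 0 < N) (hM : 0 < M)
    (hq : ∀ q : ℕ, ∀ hq : q.Prime, q ≠ 2 → q ∣ N * M → @legendreSym q ⟨hq⟩ (p : ℤ) = 1)
    (h2 : 2 ∣ N * M → p % 8 = 1) :
    ∃ β δ : ℚ, (M : ℚ) * β ^ 2 - (p : ℚ) * M * δ ^ 2 = N := by
  haveI hpF : Fact p.Prime := ⟨hp⟩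
  have hp5 : 5 ≤ p := by have := hp.two_le; omega
  -- every prime dividing N*M is rationally represented by x² - p y²
  have hrep : ∀ q : ℕ, q.Prime → q ∣ N * M → ∃ x y : ℚ, x ^ 2 - p * y ^ 2 = q := by
    intro q hq' hdvd
    haveI hqF : Fact q.Prime := ⟨hq'⟩
    by_cases hq2 : q = 2
    · subst hq2
      have hp8 : p % 8 = 1 := h2 hdvd
      have hsq : IsSquare (2 : ZMod p) := by
        rw [ZMod.exists_sq_eq_two_iff (by omega : p ≠ 2)]
        exact Or.inl hp8
      obtain ⟨r, hr⟩ := hsq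
      refine key_rep p 2 hp hq' (by omega) 1 (r.val : ℤ) ?_ ?_
      · omega
      · have : (((r.val : ℤ) ^ 2 - 2 : ℤ) : ZMod p) = 0 := by
          push_cast
          rw [ZMod.natCast_val, ZMod.cast_id]
          rw [hr]; ring
        exact_mod_cast (ZMod.intCast_zmod_eq_zero_iff_dvd _ p).mp this
    · have hL : legendreSym q p = 1 := hq q hq' hq2 hdvd
      have hqp : q ≠ p := by
        rintro rfl
        have h0 : legendreSym q q = 0 := by
          rw [legendreSym.eq_zero_iff]
          push_cast
          exact ZMod.natCast_self q
        omega
      have hp0 : ((p : ℤ) : ZMod q) ≠ 0 := by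
        intro h
        rw [ZMod.intCast_zmod_eq_zero_iff_dvd] at h
        exact hqp ((Nat.prime_dvd_prime_iff_eq hq' hp).mp (by exact_mod_cast h))
      have hq0 : ((q : ℤ) : ZMod p) ≠ 0 := by
        intro h
        rw [ZMod.intCast_zmod_eq_zero_iff_dvd] at h
        exact hqp ((Nat.prime_dvd_prime_iff_eq hp hq').mp (by exact_mod_cast h)).symm
      have hsq1 : IsSquare ((p : ℤ) : ZMod q) := (legendreSym.eq_one_iff q hp0).mp hL
      have hL2 : legendreSym p q = 1 := by
        rw [← legendreSym.quadratic_reciprocity_one_mod_four hp4 hq2]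
        exact hL
      have hsq2 : IsSquare ((q : ℤ) : ZMod p) := (legendreSym.eq_one_iff p hq0).mp hL2
      obtain ⟨r1, hr1⟩ := hsq1
      obtain ⟨r2, hr2⟩ := hsq2
      refine key_rep p q hp hq' (Ne.symm hqp) (r1.val : ℤ) (r2.val : ℤ) ?_ ?_
      · have : (((r1.val : ℤ) ^ 2 - p : ℤ) : ZMod q) = 0 := by
          push_cast
          rw [ZMod.natCast_val, ZMod.cast_id]
          have hr1' : ((p : ℕ) : ZMod q) = r1 * r1 := by exact_mod_cast hr1
          rw [hr1']; ring
        exact (ZMod.intCast_zmod_eq_zero_iff_dvd _ q).mp this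
      · have : (((r2.val : ℤ) ^ 2 - q : ℤ) : ZMod p) = 0 := by
          push_cast
          rw [ZMod.natCast_val, ZMod.cast_id]
          have hr2' : ((q : ℕ) : ZMod p) = r2 * r2 := by exact_mod_cast hr2
          rw [hr2']; ring
        exact (ZMod.intCast_zmod_eq_zero_iff_dvd _ p).mp this
  -- multiply the representations
  have main : ∀ n : ℕ, n ∣ N * M → ∃ x y : ℚ, x ^ 2 - p * y ^ 2 = n := by
    intro n
    induction n using Nat.strong_induction_on with
    | _ n ih =>
      intro hdvd
      have hNM : N * M ≠ 0 := by positivity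
      have hn0 : n ≠ 0 := by rintro rfl; exact hNM (Nat.eq_zero_of_zero_dvd hdvd)
      rcases eq_or_ne n 1 with rfl | hn1
      · exact ⟨1, 0, by norm_num⟩
      · have hqf := Nat.minFac_prime hn1
        obtain ⟨x, y, hxy⟩ := hrep n.minFac hqf ((Nat.minFac_dvd n).trans hdvd)
        obtain ⟨u, v, huv⟩ := ih (n / n.minFac)
          (Nat.div_lt_self (Nat.pos_of_ne_zero hn0) hqf.one_lt)
          ((Nat.div_dvd_of_dvd (Nat.minFac_dvd n)).trans hdvd)
        refine ⟨x * u + p * y * v, x * v + y * u, ?_⟩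
        have hcast : (n : ℚ) = (n.minFac : ℚ) * ((n / n.minFac : ℕ) : ℚ) := by
          rw [← Nat.cast_mul, Nat.mul_div_cancel' (Nat.minFac_dvd n)]
        rw [hcast, ← hxy, ← huv]; ring
  obtain ⟨x, y, hxy⟩ := main (N * M) dvd_rfl
  refine ⟨x / M, y / M, ?_⟩
  have hMQ : (M : ℚ) ≠ 0 := Nat.cast_ne_zero.mpr hM.ne'
  have hxy' : x ^ 2 - p * y ^ 2 = (N : ℚ) * M := by rw [hxy]; push_cast; ring
  field_simp
  linear_combination hxy'
end

section
/- Let p be a prime with p ≡ 1 (mod 4), let Δ, M, S be positive integers with N = M·S and p ∤ ΔN, and let β, δ ∈ ℚ with 2β, 2δ ∈ ℤ, 2β ≡ 2δ (mod 2), and β² − p·δ² = S. Let a_N, a_M ∈ ℤ satisfy p ∣ a_N²·Δ·N + 1, p ∣ a_M²·Δ·M + 1, and p ∣ (a_N·(2β) − 2a_M) in ℤ. Let Ψ : ℍ[ℚ,−ΔN,p] → ℍ[ℚ,−ΔM,p] be the ℚ-linear map determined by Ψ(1) = 1, Ψ(i) = β·i′ + δ·k′, Ψ(j) = j′, Ψ(k)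 = pδ·i′ + β·k′, where i′, j′, k′ are the generators of ℍ[ℚ,−ΔM,p]. Then Ψ is a ℚ-algebra homomorphism and Ψ maps R(N) into R(M), where R(N) is the ℤ-span of e₁^N = 1, e₂^N = (1+j)/2, e₃^N = (i+k)/2, e₄^N = (a_N·ΔN·j + k)/p in ℍ[ℚ,−ΔN,p] and R(M) is the ℤ-span of e₁^M = 1, e₂^M = (1+j′)/2, e₃^M = (i′+k′)/2, e₄^M = (a_M·ΔM·j′ + k′)/p in ℍ[ℚ,−ΔM,p]. -/
open Quaternion

/-- Hashimoto's Eichler order `R(L)` of level `L` in `ℍ[ℚ, -ΔL, p]`. -/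
def RL (Δ L p : ℕ) (a : ℤ) : Submodule ℤ ℍ[ℚ, -((Δ : ℚ) * L), (p : ℚ)] :=
  Submodule.span ℤ
    {(1 : ℍ[ℚ, -((Δ : ℚ) * L), (p : ℚ)]), ⟨1/2, 0, 1/2, 0⟩, ⟨0, 1/2, 0, 1/2⟩,
      ⟨0, 0, (a : ℚ) * Δ * L / p, 1 / (p : ℚ)⟩}

/-- The `ℚ`-linear map `Ψ : ℍ[ℚ,-ΔN,p] → ℍ[ℚ,-ΔM,p]` with `Ψ(1) = 1`,
`Ψ(i) = β·i′ + δ·k′`, `Ψ(j) = j′`, `Ψ(k) = pδ·i′ + β·k′`. -/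
def Psi (Δ N M p : ℕ) (β δ : ℚ) :
    ℍ[ℚ, -((Δ : ℚ) * N), (p : ℚ)] → ℍ[ℚ, -((Δ : ℚ) * M), (p : ℚ)] := fun h =>
  ⟨h.re, β * h.imI + (p : ℚ) * δ * h.imK, h.imJ, δ * h.imI + β * h.imK⟩

set_option maxHeartbeats 1000000

/-- `Ψ` is a `ℚ`-algebra homomorphism mapping `R(N)` into `R(M)`. -/
theorem stmt_16 (p : ℕ) (hp : p.Prime) (hp4 : p % 4 = 1)
    (Δ M S N : ℕ) (hΔ : 0 < Δ) (hM : 0 < M) (hS : 0 < S) (hN : N = M * S)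
    (hpΔN : ¬ p ∣ Δ * N)
    (β δ : ℚ) (b d : ℤ) (hb : (b : ℚ) = 2 * β) (hd : (d : ℚ) = 2 * δ)
    (hparity : b % 2 = d % 2)
    (hβδ : β ^ 2 - (p : ℚ) * δ ^ 2 = (S : ℚ))
    (aN aM : ℤ) (haN : (p : ℤ) ∣ aN ^ 2 * Δ * N + 1) (haM : (p : ℤ) ∣ aM ^ 2 * Δ * M + 1)
    (hcong : (p : ℤ) ∣ aN * b - 2 * aM) :
    (∀ x y, Psi Δ N M p β δ (x * y) = Psi Δ N M p β δ x * Psi Δ N M p β δ y) ∧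
    Psi Δ N M p β δ 1 = 1 ∧
    (∀ h ∈ RL Δ N p aN, Psi Δ N M p β δ h ∈ RL Δ M p aM) := by
  have hp2le := hp.two_le
  have hpQ : (p : ℚ) ≠ 0 := by positivity
  have hNq : (N : ℚ) = M * (β ^ 2 - p * δ ^ 2) := by
    rw [hβδ]; push_cast [hN]; ring
  obtain ⟨s, hs⟩ : ∃ s : ℤ, (p : ℤ) = 4 * s + 1 := ⟨(p / 4 : ℕ), by omega⟩
  obtain ⟨e, he⟩ : ∃ e : ℤ, d - b = 2 * e := Int.ModEq.dvd hparity
  -- p does not divide aN, aM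
  have hnd : ∀ a : ℤ, ∀ L : ℕ, (p : ℤ) ∣ a ^ 2 * Δ * L + 1 → ¬ (p:ℤ) ∣ a := by
    intro a L ha h
    have h2 : (p:ℤ) ∣ a ^ 2 * Δ * L :=
      Dvd.dvd.mul_right (Dvd.dvd.mul_right (h.mul_right a |>.trans (by rw [sq])) _) _
    have h1 : (p:ℤ) ∣ 1 := by have := ha.sub h2; simpa using this
    have := Int.isUnit_iff.mp (isUnit_of_dvd_one h1)
    omega
  have hprime : Prime ((p : ℤ)) := Nat.prime_iff_prime_int.mp hp
  have hp2 : ¬ (p:ℤ) ∣ 2 := by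
    intro h
    have h2 : p ∣ 2 := by exact_mod_cast h
    have := Nat.le_of_dvd (by norm_num) h2
    omega
  obtain ⟨k, hk⟩ : ∃ k : ℤ, aN * Δ * N - (-(e + 2 * s * d)) * (aM * Δ * M) = (p:ℤ) * k := by
    obtain ⟨x1, hx1⟩ := haN
    obtain ⟨x2, hx2⟩ := haM
    obtain ⟨x3, hx3⟩ := hcong
    have hX : (p:ℤ) ∣ aN * aM * (2 * (aN * Δ * N) - b * (aM * Δ * M)) :=
      ⟨2 * aM * x1 - aN * b * x2 + x3, by linear_combination 2 * aM * hx1 - aN * b * hx2 + hx3⟩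
    have hX' : (p:ℤ) ∣ 2 * (aN * Δ * N) - b * (aM * Δ * M) := by
      rcases hprime.dvd_mul.mp hX with h | h
      · rcases hprime.dvd_mul.mp h with h | h
        · exact absurd h (hnd aN N ⟨x1, hx1⟩)
        · exact absurd h (hnd aM M ⟨x2, hx2⟩)
      · exact h
    have h2Y : (p:ℤ) ∣ 2 * (aN * Δ * N - (-(e + 2 * s * d)) * (aM * Δ * M)) := by
      obtain ⟨c, hc⟩ := hX'
      exact ⟨c + d * (aM * Δ * M),
        by linear_combination hc - (aM:ℤ) * Δ * M * he - aM * Δ * M * d * hs⟩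
    rcases hprime.dvd_mul.mp h2Y with h | h
    · exact absurd h hp2
    · exact h
  -- rational substitution facts
  have hβ2 : β = (b : ℚ) / 2 := by rw [hb]; ring
  have hδ2 : δ = (d : ℚ) / 2 := by rw [hd]; ring
  have heQ : (e : ℚ) = ((d : ℚ) - b) / 2 := by
    have : ((d : ℚ) - b) = 2 * e := by exact_mod_cast he
    rw [this]; ring
  have hsQ : (s : ℚ) = ((p : ℚ) - 1) / 4 := by
    have : ((p : ℚ)) = 4 * s + 1 := by exact_mod_cast hs
    rw [this]; ring
  have hkQ : (k : ℚ) =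
      ((aN:ℚ) * Δ * N - (-(e:ℚ) - 2 * s * d) * ((aM:ℚ) * Δ * M)) / p := by
    have h' : (aN:ℚ) * Δ * N - (-((e:ℚ) + 2 * s * d)) * ((aM:ℚ) * Δ * M) = p * k := by
      exact_mod_cast hk
    field_simp
    linear_combination -h'
  refine ⟨?_, ?_, ?_⟩
  · intro x y
    rw [QuaternionAlgebra.ext_iff]
    simp only [Psi, QuaternionAlgebra.re_mul, QuaternionAlgebra.imI_mul,
      QuaternionAlgebra.imJ_mul, QuaternionAlgebra.imK_mul, hNq]
    refine ⟨by ring, by ring, by ring, by ring⟩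
  · rw [QuaternionAlgebra.ext_iff]; simp [Psi]
  · -- membership
    have hsm : ∀ (n : ℤ) (x : ℍ[ℚ, -((Δ:ℚ)*M), (p:ℚ)]),
        n • x = (⟨n * x.re, n * x.imI, n * x.imJ, n * x.imK⟩ : ℍ[ℚ, -((Δ:ℚ)*M), (p:ℚ)]) := by
      intro n x
      rw [QuaternionAlgebra.ext_iff]
      simp [QuaternionAlgebra.re_smul, QuaternionAlgebra.imI_smul, QuaternionAlgebra.imJ_smul,
        QuaternionAlgebra.imK_smul, zsmul_eq_mul]
    have m1 : (1 : ℍ[ℚ, -((Δ:ℚ)*M), (p:ℚ)]) ∈ RL Δ M p aM :=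
      Submodule.subset_span (by left; rfl)
    have m2 : (⟨1/2, 0, 1/2, 0⟩ : ℍ[ℚ, -((Δ:ℚ)*M), (p:ℚ)]) ∈ RL Δ M p aM :=
      Submodule.subset_span (by right; left; rfl)
    have m3 : (⟨0, 1/2, 0, 1/2⟩ : ℍ[ℚ, -((Δ:ℚ)*M), (p:ℚ)]) ∈ RL Δ M p aM :=
      Submodule.subset_span (by right; right; left; rfl)
    have m4 : (⟨0, 0, (aM : ℚ) * Δ * M / p, 1 / (p : ℚ)⟩ : ℍ[ℚ, -((Δ:ℚ)*M), (p:ℚ)])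
        ∈ RL Δ M p aM := Submodule.subset_span (by right; right; right; rfl)
    have comb : ∀ n1 n2 n3 n4 : ℤ,
        n1 • (1 : ℍ[ℚ, -((Δ:ℚ)*M), (p:ℚ)]) + n2 • (⟨1/2, 0, 1/2, 0⟩ : ℍ[ℚ, -((Δ:ℚ)*M), (p:ℚ)])
          + n3 • (⟨0, 1/2, 0, 1/2⟩ : ℍ[ℚ, -((Δ:ℚ)*M), (p:ℚ)])
          + n4 • (⟨0, 0, (aM : ℚ) * Δ * M / p, 1 / (p : ℚ)⟩ : ℍ[ℚ, -((Δ:ℚ)*M), (p:ℚ)])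
          ∈ RL Δ M p aM := fun n1 n2 n3 n4 =>
      add_mem (add_mem (add_mem (Submodule.smul_mem _ _ m1) (Submodule.smul_mem _ _ m2))
        (Submodule.smul_mem _ _ m3)) (Submodule.smul_mem _ _ m4)
    intro h hh
    refine Submodule.span_induction ?_ ?_ ?_ ?_ hh
    · intro x hx
      rcases hx with rfl | rfl | rfl | rfl
      · have h1 : Psi Δ N M p β δ 1 = 1 := by rw [QuaternionAlgebra.ext_iff]; simp [Psi]
        rw [h1]; exact m1
      · have h1 : Psi Δ N M p β δ ⟨1/2, 0, 1/2, 0⟩ = (⟨1/2, 0, 1/2, 0⟩ : ℍ[ℚ, -((Δ:ℚ)*M), (p:ℚ)]) := by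
          rw [QuaternionAlgebra.ext_iff]; simp [Psi]
        rw [h1]; exact m2
      · have h1 : Psi Δ N M p β δ ⟨0, 1/2, 0, 1/2⟩ =
            (-(aM * Δ * M * d * s)) • (1 : ℍ[ℚ, -((Δ:ℚ)*M), (p:ℚ)])
            + (2 * (aM * Δ * M * d * s)) • (⟨1/2, 0, 1/2, 0⟩ : ℍ[ℚ, -((Δ:ℚ)*M), (p:ℚ)])
            + (b + e + 2 * s * d) • (⟨0, 1/2, 0, 1/2⟩ : ℍ[ℚ, -((Δ:ℚ)*M), (p:ℚ)])
            + (-((p:ℤ) * d * s)) • (⟨0, 0, (aM : ℚ) * Δ * M / p, 1 / (p : ℚ)⟩ : ℍ[ℚ, -((Δ:ℚ)*M), (p:ℚ)]) := by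
          rw [QuaternionAlgebra.ext_iff]
          simp only [hsm, Psi, QuaternionAlgebra.re_add, QuaternionAlgebra.imI_add,
            QuaternionAlgebra.imJ_add, QuaternionAlgebra.imK_add, QuaternionAlgebra.re_one,
            QuaternionAlgebra.imI_one, QuaternionAlgebra.imJ_one, QuaternionAlgebra.imK_one]
          refine ⟨?_, ?_, ?_, ?_⟩ <;>
            · push_cast
              simp only [hβ2, hδ2, heQ, hsQ]
              field_simp
              ring
        rw [h1]; exact comb _ _ _ _
      · have h1 : Psi Δ N M p β δ ⟨0, 0, (aN : ℚ) * Δ * N / p, 1 / (p:ℚ)⟩ =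
            (-k) • (1 : ℍ[ℚ, -((Δ:ℚ)*M), (p:ℚ)])
            + (2 * k) • (⟨1/2, 0, 1/2, 0⟩ : ℍ[ℚ, -((Δ:ℚ)*M), (p:ℚ)])
            + d • (⟨0, 1/2, 0, 1/2⟩ : ℍ[ℚ, -((Δ:ℚ)*M), (p:ℚ)])
            + (-(e + 2 * s * d)) • (⟨0, 0, (aM : ℚ) * Δ * M / p, 1 / (p : ℚ)⟩ : ℍ[ℚ, -((Δ:ℚ)*M), (p:ℚ)]) := by
          rw [QuaternionAlgebra.ext_iff]
          simp only [hsm, Psi, QuaternionAlgebra.re_add, QuaternionAlgebra.imI_add,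
            QuaternionAlgebra.imJ_add, QuaternionAlgebra.imK_add, QuaternionAlgebra.re_one,
            QuaternionAlgebra.imI_one, QuaternionAlgebra.imJ_one, QuaternionAlgebra.imK_one]
          refine ⟨?_, ?_, ?_, ?_⟩ <;>
            · push_cast
              simp only [hβ2, hδ2, hkQ, heQ, hsQ]
              field_simp
              ring
        rw [h1]; exact comb _ _ _ _
    · have h0 : Psi Δ N M p β δ 0 = 0 := by rw [QuaternionAlgebra.ext_iff]; simp [Psi]
      rw [h0]; exact (RL Δ M p aM).zero_mem
    · intro x y hx hy ihx ihy
      have h1 : Psi Δ N M p β δ (x + y) = Psi Δ N M p β δ x + Psi Δ N M p β δ y := by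
        rw [QuaternionAlgebra.ext_iff]; simp [Psi]; exact ⟨by ring, by ring⟩
      rw [h1]; exact add_mem ihx ihy
    · intro n x hx ihx
      have h1 : Psi Δ N M p β δ (n • x) = n • Psi Δ N M p β δ x := by
        rw [QuaternionAlgebra.ext_iff]; simp [Psi, zsmul_eq_mul]; exact ⟨by ring, by ring⟩
      rw [h1]; exact Submodule.smul_mem _ _ ihx
end

section
/- Let Δ be a positive integer, p an odd prime with p ∤ Δ, and a ∈ ℤ with p ∣ a²Δ + 1. Let q be a prime with q ≠ p and ω ∈ ℤ_q with ω² = p; let s be an odd prime with s ≠ p and x, y ∈ ℤ_s with x² − p·y² = −Δ and y ≠ 0; let c ∈ ℤ_p with c² = −Δ. For h ∈ R(1) ⊆ ℍ[ℚ,−Δ,p] define: A_q(h) to mean the lower-left entry of φ_q(h) is 0, A_s(h) to mean the lower-left entry of φ_s(h) is 0, and A_p(h) to mean the lower-left entry of φ_p(h) is 0 (h viewed in the corresponding completed algebra in each case). Then each of the three sets {h ∈ R(1) : A_q(h) and A_p(h)}, {h ∈ R(1) : A_s(h) and A_p(h)}, {h ∈ R(1) : A_q(h) and A_s(h)} equals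 ℤ·e₁, i.e. if h = α·e₁ + β·e₂ + γ·e₃ + δ·e₄ with α, β, γ, δ ∈ ℤ satisfies any two of the three conditions then β = γ = δ = 0. -/
open Quaternion

section Aux

lemma sq_ne_prime' (p : ℕ) (hp : p.Prime) (u : ℚ) : u ^ 2 ≠ (p : ℚ) := by
  intro h
  have h2 : ((u : ℝ)) ^ 2 = (p : ℝ) := by exact_mod_cast congrArg (Rat.cast : ℚ → ℝ) h
  have h3 : Real.sqrt ((p : ℝ)) = |(u : ℝ)| := by rw [← h2, Real.sqrt_sq_eq_abs]
  exact hp.irrational_sqrt ⟨|u|, by push_cast; exact h3.symm⟩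

lemma lemQ (q p : ℕ) [Fact q.Prime] (hp : p.Prime) (ω : ℤ_[q]) (hω : ω ^ 2 = (p : ℤ_[q]))
    (r t : ℚ) (h : (r : ℚ_[q]) = (t : ℚ_[q]) * ω) : r = 0 ∧ t = 0 := by
  have hω' : ((ω : ℚ_[q])) ^ 2 = (p : ℚ_[q]) := by exact_mod_cast congrArg _ hω
  have hsq : ((r ^ 2 : ℚ) : ℚ_[q]) = ((t ^ 2 * p : ℚ) : ℚ_[q]) := by
    push_cast
    rw [h, mul_pow, hω']
  have h2 : r ^ 2 = t ^ 2 * p := Rat.cast_injective hsq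
  by_cases ht : t = 0
  · subst ht
    simp at h2
    exact ⟨h2, rfl⟩
  · exfalso
    apply sq_ne_prime' p hp (r / t)
    field_simp
    linarith [h2]

lemma lemP (p Δ : ℕ) [Fact p.Prime] (hΔ : 0 < Δ) (c : ℤ_[p]) (hc : c ^ 2 = -(Δ : ℤ_[p]))
    (r t : ℚ) (h : (r : ℚ_[p]) = (t : ℚ_[p]) * c) : r = 0 ∧ t = 0 := by
  have hc' : ((c : ℚ_[p])) ^ 2 = -(Δ : ℚ_[p]) := by exact_mod_cast congrArg _ hc
  have hsq : ((r ^ 2 : ℚ) : ℚ_[p]) = ((-(t ^ 2 * Δ) : ℚ) : ℚ_[p]) := by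
    push_cast
    rw [h, mul_pow, hc']
    ring
  have h2 : r ^ 2 = -(t ^ 2 * Δ) := Rat.cast_injective hsq
  have hΔ' : (0 : ℚ) < Δ := by exact_mod_cast hΔ
  have ht2 : t ^ 2 = 0 := by nlinarith [sq_nonneg r, sq_nonneg t]
  have hr2 : r ^ 2 = 0 := by nlinarith [sq_nonneg r, sq_nonneg t]
  exact ⟨pow_eq_zero_iff two_ne_zero |>.mp hr2, pow_eq_zero_iff two_ne_zero |>.mp ht2⟩

end Aux

/-- The coefficient-wise inclusion `ℍ[ℚ, -Δ, p] → ℍ[ℚ_ℓ, -Δ, p]`. -/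
noncomputable def toLoc (ℓ : ℕ) [Fact ℓ.Prime] (Δ p : ℕ) :
    ℍ[ℚ, -(Δ : ℚ), (p : ℚ)] → ℍ[ℚ_[ℓ], -(Δ : ℚ_[ℓ]), (p : ℚ_[ℓ])] := fun h =>
  ⟨(h.re : ℚ_[ℓ]), (h.imI : ℚ_[ℓ]), (h.imJ : ℚ_[ℓ]), (h.imK : ℚ_[ℓ])⟩

/-- `φ_q : ℍ[ℚ_q, -Δ, p] → M₂(ℚ_q)`, `α + βi + γj + δk ↦ !![α − γω, β + δω; Δ(−β + δω), α + γω]`. -/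
noncomputable def phiQ (q : ℕ) [Fact q.Prime] (Δ p : ℕ) (ω : ℤ_[q]) :
    ℍ[ℚ_[q], -(Δ : ℚ_[q]), (p : ℚ_[q])] → Matrix (Fin 2) (Fin 2) ℚ_[q] := fun h =>
  !![h.re - h.imJ * (ω : ℚ_[q]), h.imI + h.imK * (ω : ℚ_[q]);
     (Δ : ℚ_[q]) * (-h.imI + h.imK * (ω : ℚ_[q])), h.re + h.imJ * (ω : ℚ_[q])]

/-- `φ_s : ℍ[ℚ_s, -Δ, p] → M₂(ℚ_s)`, sending `α + βi + γj + δk` to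
`!![α + βx − δpy, −βpy + γp + δpx; βy + γ − δx, α − βx + δpy]`. -/
noncomputable def phiS (s : ℕ) [Fact s.Prime] (Δ p : ℕ) (x y : ℤ_[s]) :
    ℍ[ℚ_[s], -(Δ : ℚ_[s]), (p : ℚ_[s])] → Matrix (Fin 2) (Fin 2) ℚ_[s] := fun h =>
  !![h.re + h.imI * (x : ℚ_[s]) - h.imK * (p : ℚ_[s]) * (y : ℚ_[s]),
     -h.imI * (p : ℚ_[s]) * (y : ℚ_[s]) + h.imJ * (p : ℚ_[s]) + h.imK * (p : ℚ_[s]) * (x : ℚ_[s]);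
     h.imI * (y : ℚ_[s]) + h.imJ - h.imK * (x : ℚ_[s]),
     h.re - h.imI * (x : ℚ_[s]) + h.imK * (p : ℚ_[s]) * (y : ℚ_[s])]

/-- `φ_p : ℍ[ℚ_p, -Δ, p] → M₂(ℚ_p)`, `α + βi + γj + δk ↦ !![α − βc, γ − δc; γp + δpc, α + βc]`. -/
noncomputable def phiP (p : ℕ) [Fact p.Prime] (Δ : ℕ) (c : ℤ_[p]) :
    ℍ[ℚ_[p], -(Δ : ℚ_[p]), (p : ℚ_[p])] → Matrix (Fin 2) (Fin 2) ℚ_[p] := fun h =>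
  !![h.re - h.imI * (c : ℚ_[p]), h.imJ - h.imK * (c : ℚ_[p]);
     h.imJ * (p : ℚ_[p]) + h.imK * (p : ℚ_[p]) * (c : ℚ_[p]), h.re + h.imI * (c : ℚ_[p])]

/-- Hashimoto's maximal order `R(1)` in `ℍ[ℚ, -Δ, p]`. -/
def R1 (Δ p : ℕ) (a : ℤ) : Submodule ℤ ℍ[ℚ, -(Δ : ℚ), (p : ℚ)] :=
  Submodule.span ℤ
    {(1 : ℍ[ℚ, -(Δ : ℚ), (p : ℚ)]), ⟨1/2, 0, 1/2, 0⟩, ⟨0, 1/2, 0, 1/2⟩,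
      ⟨0, 0, (a : ℚ) * Δ / p, 1 / (p : ℚ)⟩}

lemma mem_R1 (Δ p : ℕ) (a : ℤ) (h : ℍ[ℚ, -(Δ : ℚ), (p : ℚ)]) (hm : h ∈ R1 Δ p a) :
    ∃ α β γ δ : ℤ, h.re = α + β / 2 ∧ h.imI = γ / 2 ∧
      h.imJ = β / 2 + δ * ((a : ℚ) * Δ / p) ∧ h.imK = γ / 2 + δ * (1 / (p : ℚ)) := by
  rw [R1, Submodule.mem_span_insert] at hm
  obtain ⟨α, z, hz, rfl⟩ := hm
  rw [Submodule.mem_span_insert] at hz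
  obtain ⟨β, z, hz, rfl⟩ := hz
  rw [Submodule.mem_span_insert] at hz
  obtain ⟨γ, z, hz, rfl⟩ := hz
  rw [Submodule.mem_span_singleton] at hz
  obtain ⟨δ, rfl⟩ := hz
  refine ⟨α, β, γ, δ, ?_, ?_, ?_, ?_⟩ <;> simp <;> ring

lemma keyR1 (Δ p : ℕ) (hp : p ≠ 0) (a : ℤ) (h : ℍ[ℚ, -(Δ : ℚ), (p : ℚ)]) (hm : h ∈ R1 Δ p a)
    (hI : h.imI = 0) (hJ : h.imJ = 0) (hK : h.imK = 0) :
    h ∈ (Submodule.span ℤ {(1 : ℍ[ℚ, -(Δ : ℚ), (p : ℚ)])} :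
      Set ℍ[ℚ, -(Δ : ℚ), (p : ℚ)]) := by
  obtain ⟨α, β, γ, δ, hre, hi, hj, hk⟩ := mem_R1 Δ p a h hm
  have hpQ : (p : ℚ) ≠ 0 := Nat.cast_ne_zero.mpr hp
  have hγ : (γ : ℚ) = 0 := by rw [hI] at hi; linarith
  have hδ : (δ : ℚ) = 0 := by
    rw [hK, hγ] at hk
    field_simp at hk
    linarith
  have hβ : (β : ℚ) = 0 := by
    rw [hJ, hδ] at hj
    simp at hj
    linarith
  refine Submodule.mem_span_singleton.mpr ⟨α, ?_⟩
  ext <;> simp [hre, hβ, hI, hJ, hK]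

/-- Any element of `R(1)` satisfying two of the three conditions `A_q`, `A_s`, `A_p`
(vanishing of the lower-left entry of the corresponding local matrix image) lies in `ℤ·e₁`:
each of the three pairwise intersections equals `ℤ·1`. -/
theorem stmt_19 (Δ : ℕ) (hΔ : 0 < Δ)
    (p : ℕ) [Fact p.Prime] (hp2 : p ≠ 2) (hpΔ : ¬ p ∣ Δ)
    (a : ℤ) (ha : (p : ℤ) ∣ a ^ 2 * Δ + 1)
    (q : ℕ) [Fact q.Prime] (hqp : q ≠ p) (ω : ℤ_[q]) (hω : ω ^ 2 = (p : ℤ_[q]))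
    (s : ℕ) [Fact s.Prime] (hs2 : s ≠ 2) (hsp : s ≠ p)
    (x y : ℤ_[s]) (hxy : x ^ 2 - (p : ℤ_[s]) * y ^ 2 = -(Δ : ℤ_[s])) (hy : y ≠ 0)
    (c : ℤ_[p]) (hc : c ^ 2 = -(Δ : ℤ_[p])) :
    {h : ℍ[ℚ, -(Δ : ℚ), (p : ℚ)] | h ∈ R1 Δ p a ∧
        phiQ q Δ p ω (toLoc q Δ p h) 1 0 = 0 ∧ phiP p Δ c (toLoc p Δ p h) 1 0 = 0} =
      (Submodule.span ℤ {(1 : ℍ[ℚ, -(Δ : ℚ), (p : ℚ)])} : Set ℍ[ℚ, -(Δ : ℚ), (p : ℚ)]) ∧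
    {h : ℍ[ℚ, -(Δ : ℚ), (p : ℚ)] | h ∈ R1 Δ p a ∧
        phiS s Δ p x y (toLoc s Δ p h) 1 0 = 0 ∧ phiP p Δ c (toLoc p Δ p h) 1 0 = 0} =
      (Submodule.span ℤ {(1 : ℍ[ℚ, -(Δ : ℚ), (p : ℚ)])} : Set ℍ[ℚ, -(Δ : ℚ), (p : ℚ)]) ∧
    {h : ℍ[ℚ, -(Δ : ℚ), (p : ℚ)] | h ∈ R1 Δ p a ∧
        phiQ q Δ p ω (toLoc q Δ p h) 1 0 = 0 ∧ phiS s Δ p x y (toLoc s Δ p h) 1 0 = 0} =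
      (Submodule.span ℤ {(1 : ℍ[ℚ, -(Δ : ℚ), (p : ℚ)])} : Set ℍ[ℚ, -(Δ : ℚ), (p : ℚ)]) := by
  have hp : p.Prime := Fact.out
  have hp0 : p ≠ 0 := hp.pos.ne'
  -- condition extractors
  have condQ : ∀ h : ℍ[ℚ, -(Δ : ℚ), (p : ℚ)], phiQ q Δ p ω (toLoc q Δ p h) 1 0 = 0 →
      h.imI = 0 ∧ h.imK = 0 := by
    intro h hcond
    simp [phiQ, toLoc] at hcond
    rcases hcond with h1 | h2
    · exact absurd h1 hΔ.ne'
    · exact lemQ q p hp ω hω h.imI h.imK (by linear_combination -h2)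
  have condP : ∀ h : ℍ[ℚ, -(Δ : ℚ), (p : ℚ)], phiP p Δ c (toLoc p Δ p h) 1 0 = 0 →
      h.imJ = 0 ∧ h.imK = 0 := by
    intro h hcond
    simp [phiP, toLoc] at hcond
    have hpq : (p : ℚ_[p]) ≠ 0 := Nat.cast_ne_zero.mpr hp0
    have h0 : ((h.imJ : ℚ_[p]) + (h.imK : ℚ_[p]) * c) * p = 0 := by linear_combination hcond
    rcases mul_eq_zero.mp h0 with h1 | h1
    · have h2 : ((h.imJ : ℚ) : ℚ_[p]) = ((-h.imK : ℚ) : ℚ_[p]) * c := by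
        push_cast
        linear_combination h1
      have := lemP p Δ hΔ c hc h.imJ (-h.imK) h2
      exact ⟨this.1, neg_eq_zero.mp this.2⟩
    · exact absurd h1 hpq
  have condS : ∀ h : ℍ[ℚ, -(Δ : ℚ), (p : ℚ)], phiS s Δ p x y (toLoc s Δ p h) 1 0 = 0 →
      ((h.imI : ℚ) : ℚ_[s]) * y + ((h.imJ : ℚ) : ℚ_[s]) - ((h.imK : ℚ) : ℚ_[s]) * x = 0 := by
    intro h hcond
    simpa [phiS, toLoc] using hcond
  have hyQ : (y : ℚ_[s]) ≠ 0 := PadicInt.coe_ne_zero.mpr hy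
  -- reverse inclusion data
  have rev : ∀ h : ℍ[ℚ, -(Δ : ℚ), (p : ℚ)],
      h ∈ (Submodule.span ℤ {(1 : ℍ[ℚ, -(Δ : ℚ), (p : ℚ)])} : Set ℍ[ℚ, -(Δ : ℚ), (p : ℚ)]) →
      h ∈ R1 Δ p a ∧ h.imI = 0 ∧ h.imJ = 0 ∧ h.imK = 0 := by
    intro h hmem
    obtain ⟨n, rfl⟩ := Submodule.mem_span_singleton.mp hmem
    refine ⟨Submodule.smul_mem _ n (Submodule.subset_span (Set.mem_insert _ _)), ?_, ?_, ?_⟩ <;>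
      simp
  refine ⟨?_, ?_, ?_⟩ <;> ext h <;>
    simp only [Set.mem_setOf_eq, SetLike.mem_coe] <;> constructor
  · rintro ⟨hm, hq, hpc⟩
    obtain ⟨hI, hK⟩ := condQ h hq
    obtain ⟨hJ, -⟩ := condP h hpc
    exact keyR1 Δ p hp0 a h hm hI hJ hK
  · intro hmem
    obtain ⟨hm, hI, hJ, hK⟩ := rev h hmem
    exact ⟨hm, by simp [phiQ, toLoc, hI, hJ, hK], by simp [phiP, toLoc, hI, hJ, hK]⟩
  · rintro ⟨hm, hs, hpc⟩
    obtain ⟨hJ, hK⟩ := condP h hpc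
    have hS := condS h hs
    rw [hJ, hK] at hS
    simp at hS
    rcases hS with h1 | h1
    · have hI : h.imI = 0 := by exact_mod_cast h1
      exact keyR1 Δ p hp0 a h hm hI hJ hK
    · exact absurd h1 hy
  · intro hmem
    obtain ⟨hm, hI, hJ, hK⟩ := rev h hmem
    exact ⟨hm, by simp [phiS, toLoc, hI, hJ, hK], by simp [phiP, toLoc, hI, hJ, hK]⟩
  · rintro ⟨hm, hq, hs⟩
    obtain ⟨hI, hK⟩ := condQ h hq
    have hS := condS h hs
    rw [hI, hK] at hS
    simp at hS
    have hJ : h.imJ = 0 := by exact_mod_cast hS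
    exact keyR1 Δ p hp0 a h hm hI hJ hK
  · intro hmem
    obtain ⟨hm, hI, hJ, hK⟩ := rev h hmem
    exact ⟨hm, by simp [phiQ, toLoc, hI, hJ, hK], by simp [phiS, toLoc, hI, hJ, hK]⟩
end
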